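/- Let K^{a,b} ⊆ ℝ^{b−a+1} be the cone of convex sequences based on points x_a < ⋯ < x_b, let A^{a,b} = span{𝟙, (x_a,…,x_b)} be the subspace of affine sequences, and let θ, ξ ∈ ℝ^{b−a+1} with Y = θ + ξ. Let θ̌ be the projection of Y onto K^{a,b} and θ̄ the orthogonal projection of θ onto A^{a,b}. Then ‖Y − θ̌‖² − ‖ξ‖² ≥ 2⟨ξ, θ − θ̄⟩ − 2‖θ̌ − θ‖² − ‖θ − θ̄‖². -/

import Mathlib

open Finset Filter Topology
open scoped InnerProductSpace

/-!
The cone `K` of convex sequences is closed under addition and nonnegative scaling and contains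
every affine sequence together with its negative. Hence for an affine `θ̄` the whole ray
`θ̌ + η (θ̌ - θ̄)`, `η ≥ 0`, lies in `K`, and minimality of `θ̌` along this ray gives the
first-order condition `⟪Y - θ̌, θ̌ - θ̄⟫ ≤ 0`. The inequality then follows from the identity
`‖Y - θ̌‖² - ‖ξ‖² - 2⟪ξ, θ - θ̄⟫ + 2‖θ̌ - θ‖² + ‖θ - θ̄‖² = -2⟪Y - θ̌, θ̌ - θ̄⟫ + ‖θ̌ + θ̄ - 2θ‖²`.
-/

section InnerProductSpace

variable {E : Type*} [NormedAddCommGroup E] [InnerProductSpace ℝ E]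

theorem real_inner_nonpos_of_forall_norm_sq_le {y p d : E}
    (h : ∀ η : ℝ, 0 < η → ‖y - p‖ ^ 2 ≤ ‖y - (p + η • d)‖ ^ 2) : ⟪y - p, d⟫_ℝ ≤ 0 := by
  have hslope : ∀ η : ℝ, 0 < η → 2 * ⟪y - p, d⟫_ℝ ≤ η * ‖d‖ ^ 2 := by
    intro η hη
    have hη' := h η hη
    rw [← sub_sub, norm_sub_sq_real (y - p), inner_smul_right, norm_smul, mul_pow,
      Real.norm_eq_abs, sq_abs] at hη'
    nlinarith
  have hlim : Tendsto (fun η : ℝ => η * ‖d‖ ^ 2) (𝓝[>] 0) (𝓝 0) :=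
    ((continuous_id.mul continuous_const).tendsto' 0 0 (zero_mul _)).mono_left nhdsWithin_le_nhds
  have := ge_of_tendsto hlim (eventually_nhdsWithin_of_forall fun η hη => hslope η hη)
  linarith

theorem norm_sq_sub_norm_sq_ge_of_real_inner_nonpos {t ξ p a : E}
    (h : ⟪t + ξ - p, p - a⟫_ℝ ≤ 0) :
    2 * ⟪ξ, t - a⟫_ℝ - 2 * ‖p - t‖ ^ 2 - ‖t - a‖ ^ 2 ≤ ‖t + ξ - p‖ ^ 2 - ‖ξ‖ ^ 2 := by
  have hsq : 0 ≤ ‖(p - t) - (t - a)‖ ^ 2 := sq_nonneg _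
  simp only [← real_inner_self_eq_norm_sq, inner_add_left, inner_sub_left, inner_add_right,
    inner_sub_right, real_inner_comm] at h hsq ⊢
  linarith

end InnerProductSpace

def truncEuclidean (N : ℕ) : (ℕ → ℝ) →ₗ[ℝ] EuclideanSpace ℝ (Fin N) :=
  (WithLp.linearEquiv 2 ℝ (Fin N → ℝ)).symm.toLinearMap ∘ₗ LinearMap.funLeft ℝ ℝ Fin.val

theorem truncEuclidean_apply (N : ℕ) (f : ℕ → ℝ) (i : Fin N) : truncEuclidean N f i = f i := rfl

theorem real_inner_truncEuclidean (N : ℕ) (f g : ℕ → ℝ) :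
    ⟪truncEuclidean N f, truncEuclidean N g⟫_ℝ = ∑ i ∈ range N, f i * g i := by
  rw [PiLp.inner_apply, ← Fin.sum_univ_eq_sum_range]
  simp [truncEuclidean_apply, mul_comm]

theorem norm_sq_truncEuclidean (N : ℕ) (f : ℕ → ℝ) :
    ‖truncEuclidean N f‖ ^ 2 = ∑ i ∈ range N, f i ^ 2 := by
  rw [← real_inner_self_eq_norm_sq, real_inner_truncEuclidean]
  simp only [sq]

def ConvexSeq (x : ℕ → ℝ) (N : ℕ) (v : ℕ → ℝ) : Prop :=
  ∀ i, 1 ≤ i → i + 1 < N →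
    (v i - v (i - 1)) / (x i - x (i - 1)) ≤ (v (i + 1) - v i) / (x (i + 1) - x i)

namespace ConvexSeq

variable {x : ℕ → ℝ} {N : ℕ} {v w : ℕ → ℝ}

theorem add (hv : ConvexSeq x N v) (hw : ConvexSeq x N w) : ConvexSeq x N (v + w) := by
  intro i h1 hi
  simpa only [Pi.add_apply, add_sub_add_comm, add_div] using add_le_add (hv i h1 hi) (hw i h1 hi)

theorem smul (hv : ConvexSeq x N v) {c : ℝ} (hc : 0 ≤ c) : ConvexSeq x N (c • v) := by
  intro i h1 hi
  simpa only [Pi.smul_apply, smul_eq_mul, ← mul_sub, mul_div_assoc] using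
    mul_le_mul_of_nonneg_left (hv i h1 hi) hc

theorem of_affine (hx : ∀ i, i + 1 < N → x i < x (i + 1)) {c₀ c₁ : ℝ}
    (hv : ∀ i < N, v i = c₀ + c₁ * x i) : ConvexSeq x N v := by
  have hslope : ∀ i, i + 1 < N → (v (i + 1) - v i) / (x (i + 1) - x i) = c₁ := fun i hi => by
    rw [hv i (by omega), hv (i + 1) hi, div_eq_iff (sub_pos.2 (hx i hi)).ne']
    ring
  intro i h1 hi
  obtain ⟨j, rfl⟩ : ∃ j, i = j + 1 := ⟨i - 1, by omega⟩
  rw [Nat.add_sub_cancel, hslope j (by omega), hslope (j + 1) hi]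

end ConvexSeq

/-- Inequality (S19) from Step 3 of the proof of Theorem 4 of the paper:
for `Y = θ + ξ`, the projection `θ̌` of `Y` onto the cone of convex sequences
and the orthogonal projection `θ̄` of `θ` onto the subspace of affine sequences
satisfy `‖Y − θ̌‖² − ‖ξ‖² ≥ 2⟨ξ, θ − θ̄⟩ − 2‖θ̌ − θ‖² − ‖θ − θ̄‖²`. -/
theorem stmt19 (N : ℕ) (x θ ξ θc θb : ℕ → ℝ)
    (hx : ∀ i, i + 1 < N → x i < x (i + 1)) :
    let convseq : (ℕ → ℝ) → Prop := fun v =>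
      ∀ i, 1 ≤ i → i + 1 < N →
        (v i - v (i - 1)) / (x i - x (i - 1)) ≤ (v (i + 1) - v i) / (x (i + 1) - x i)
    ∀ (hθc : convseq θc)
      (hθcmin : ∀ v, convseq v →
        ∑ i ∈ Finset.range N, ((θ i + ξ i) - θc i) ^ 2 ≤
          ∑ i ∈ Finset.range N, ((θ i + ξ i) - v i) ^ 2)
      (hθbaff : ∃ c₀ c₁ : ℝ, ∀ i < N, θb i = c₀ + c₁ * x i)
      (hθbmin : ∀ c₀ c₁ : ℝ,
        ∑ i ∈ Finset.range N, (θ i - θb i) ^ 2 ≤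
          ∑ i ∈ Finset.range N, (θ i - (c₀ + c₁ * x i)) ^ 2),
      2 * (∑ i ∈ Finset.range N, ξ i * (θ i - θb i)) -
          2 * (∑ i ∈ Finset.range N, (θc i - θ i) ^ 2) -
          (∑ i ∈ Finset.range N, (θ i - θb i) ^ 2) ≤
        (∑ i ∈ Finset.range N, ((θ i + ξ i) - θc i) ^ 2) -
          (∑ i ∈ Finset.range N, (ξ i) ^ 2) := by
  intro _ (hθc : ConvexSeq x N θc) hθcmin hθbaff _
  obtain ⟨c₀, c₁, hθb⟩ := hθbaff
  have hnegθb : ConvexSeq x N (-θb) :=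
    ConvexSeq.of_affine hx (c₀ := -c₀) (c₁ := -c₁) fun i hi => by
      rw [Pi.neg_apply, hθb i hi]; ring
  have hray (η : ℝ) (hη : 0 < η) : ConvexSeq x N (θc + η • (θc - θb)) := by
    rw [sub_eq_add_neg]
    exact hθc.add ((hθc.add hnegθb).smul hη.le)
  have hproj : ⟪truncEuclidean N θ + truncEuclidean N ξ - truncEuclidean N θc,
      truncEuclidean N θc - truncEuclidean N θb⟫_ℝ ≤ 0 := by
    refine real_inner_nonpos_of_forall_norm_sq_le fun η hη => ?_
    simpa only [← map_add, ← map_sub, ← map_smul, norm_sq_truncEuclidean, Pi.add_apply,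
      Pi.sub_apply, Pi.smul_apply, smul_eq_mul] using hθcmin _ (hray η hη)
  simpa only [← map_add, ← map_sub, norm_sq_truncEuclidean, real_inner_truncEuclidean,
    Pi.add_apply, Pi.sub_apply] using norm_sq_sub_norm_sq_ge_of_real_inner_nonpos hproj
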